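/- arXiv:math/9802038 — 2 statements merged into one kernel-verified Lean document; each statement's English description precedes it below -/
import Mathlib

section
/- Let V be a finite-dimensional space of smooth functions ℝ → ℂ closed under differentiation. Then V contains a nonconstant function if and only if V contains either a function z ↦ exp(λ z) for some λ ≠ 0, or a function z ↦ a + b z with b ≠ 0. -/
open Polynomial in
private lemma exp_hasDerivAt (c : ℂ) (x : ℝ) :
    HasDerivAt (fun z : ℝ => Complex.exp (c * z)) (c * Complex.exp (c * x)) x := by
  have h1 : HasDerivAt (fun z : ℝ => (z : ℂ)) 1 x := by
    exact Complex.ofRealCLM.hasDerivAt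
  simpa [mul_comm] using (h1.const_mul c).cexp

private lemma const_of_deriv_zero {g : ℝ → ℂ} (hg : Differentiable ℝ g)
    (h : ∀ x, deriv g x = 0) (x : ℝ) : g x = g 0 :=
  is_const_of_deriv_eq_zero hg h x 0

private lemma eq_exp_of_deriv_eq {g : ℝ → ℂ} {μ : ℂ} (hg : Differentiable ℝ g)
    (h : ∀ x, deriv g x = μ * g x) (x : ℝ) : g x = g 0 * Complex.exp (μ * x) := by
  have hd : ∀ y : ℝ, HasDerivAt (fun z : ℝ => g z * Complex.exp (-μ * z)) 0 y := by
    intro y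
    have h2 := ((hg y).hasDerivAt).mul (exp_hasDerivAt (-μ) y)
    refine h2.congr_deriv ?_
    rw [h y]; ring
  have key : ∀ y : ℝ, g y * Complex.exp (-μ * y) = g 0 := by
    intro y
    have := const_of_deriv_zero (g := fun z : ℝ => g z * Complex.exp (-μ * z))
      (fun z => (hd z).differentiableAt) (fun z => (hd z).deriv) y
    simpa using this
  have h2 : Complex.exp (-μ * x) * Complex.exp (μ * x) = 1 := by
    rw [← Complex.exp_add]
    ring_nf
    exact Complex.exp_zero
  calc g x = g x * (Complex.exp (-μ * x) * Complex.exp (μ * x)) := by rw [h2, mul_one]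
    _ = (g x * Complex.exp (-μ * x)) * Complex.exp (μ * x) := by ring
    _ = g 0 * Complex.exp (μ * x) := by rw [key x]

/-- A finite-dimensional space `V` of smooth functions `ℝ → ℂ` closed under
differentiation contains a nonconstant function if and only if it contains
either `z ↦ exp (λ z)` for some `λ ≠ 0`, or `z ↦ a + b z` with `b ≠ 0`. -/
theorem stmt7 (V : Submodule ℂ (ℝ → ℂ)) [FiniteDimensional ℂ V]
    (hsmooth : ∀ f ∈ V, ContDiff ℝ (⊤ : ℕ∞) f) (hD : ∀ f ∈ V, deriv f ∈ V) :
    (∃ f ∈ V, ¬ ∃ c : ℂ, f = fun _ => c) ↔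
      ((∃ μ : ℂ, μ ≠ 0 ∧ (fun z : ℝ => Complex.exp (μ * z)) ∈ V) ∨
       (∃ a b : ℂ, b ≠ 0 ∧ (fun z : ℝ => a + b * (z : ℂ)) ∈ V)) := by
  have hdiff : ∀ g ∈ V, Differentiable ℝ g := fun g hg => (hsmooth g hg).differentiable (by simp)
  constructor
  · rintro ⟨f, hfV, hfc⟩
    classical
    -- the derivative endomorphism
    set D : Module.End ℂ V :=
      { toFun := fun g => ⟨deriv (g : ℝ → ℂ), hD _ g.2⟩
        map_add' := by
          rintro ⟨g, hg⟩ ⟨h, hh⟩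
          apply Subtype.ext
          funext x
          have : deriv (g + h) x = deriv g x + deriv h x := by
            exact deriv_add (hdiff g hg x) (hdiff h hh x)
          simpa using this
        map_smul' := by
          rintro c ⟨g, hg⟩
          apply Subtype.ext
          funext x
          have : deriv (c • g) x = c • deriv g x := deriv_const_smul c (hdiff g hg x)
          simpa using this } with hDdef
    have hDcoe : ∀ g : V, ((D g : ℝ → ℂ)) = deriv (g : ℝ → ℂ) := fun g => rfl
    have hpow : ∀ (k : ℕ) (g : V), (((D ^ k) g : ℝ → ℂ)) = deriv^[k] (g : ℝ → ℂ) := by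
      intro k
      induction k with
      | zero => intro g; rfl
      | succ k ih =>
        intro g
        rw [pow_succ', Module.End.mul_apply, hDcoe, ih g]
        exact (Function.iterate_succ_apply' deriv k _).symm
    by_cases hμ : ∃ μ : ℂ, μ ≠ 0 ∧ ∃ g : V, g ≠ 0 ∧ D g = μ • g
    · -- exponential case
      obtain ⟨μ, hμ0, g, hg0, hgD⟩ := hμ
      left
      have heq : ∀ x : ℝ, deriv (g : ℝ → ℂ) x = μ * (g : ℝ → ℂ) x := by
        intro x
        have := congrFun (congrArg Subtype.val hgD) x
        simpa [hDcoe] using this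
      have hgsol := eq_exp_of_deriv_eq (hdiff _ g.2) heq
      have hg00 : (g : ℝ → ℂ) 0 ≠ 0 := by
        intro h0
        apply hg0
        apply Subtype.ext
        funext x
        simp [hgsol x, h0]
      refine ⟨μ, hμ0, ?_⟩
      have : (fun z : ℝ => Complex.exp (μ * z)) = ((g : ℝ → ℂ) 0)⁻¹ • (g : ℝ → ℂ) := by
        funext x
        simp only [Pi.smul_apply, smul_eq_mul, hgsol x]
        field_simp
      rw [this]
      exact Submodule.smul_mem V _ g.2
    · -- nilpotent case
      right
      push_neg at hμ
      -- all roots of the minimal polynomial are zero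
      have hint : IsIntegral ℂ D := Algebra.IsIntegral.isIntegral D
      have hroots : ∀ μ ∈ (minpoly ℂ D).roots, μ = 0 := by
        intro μ hmem
        have hroot : (minpoly ℂ D).IsRoot μ := Polynomial.isRoot_of_mem_roots hmem
        have hev : D.HasEigenvalue μ := Module.End.hasEigenvalue_of_isRoot hroot
        obtain ⟨v, hv⟩ := hev.exists_hasEigenvector
        by_contra hne
        exact hμ μ hne v hv.2 hv.apply_eq_smul
      have hsplit : (minpoly ℂ D).Splits := IsAlgClosed.splits _
      have hmon : (minpoly ℂ D).Monic := minpoly.monic hint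
      have hfac := hsplit.eq_prod_roots_of_monic hmon
      set m := Multiset.card (minpoly ℂ D).roots with hm
      have hXm : minpoly ℂ D = Polynomial.X ^ m := by
        rw [hfac]
        have : (minpoly ℂ D).roots.map (fun a => Polynomial.X - Polynomial.C a)
            = Multiset.replicate m Polynomial.X := by
          rw [show m = Multiset.card ((minpoly ℂ D).roots.map
              (fun a => Polynomial.X - Polynomial.C a)) by simp [hm]]
          apply Multiset.eq_replicate_of_mem
          intro b hb
          obtain ⟨a, ha, rfl⟩ := Multiset.mem_map.mp hb
          rw [hroots a ha]
          simp
        rw [this, Multiset.prod_replicate]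
      have hnil : D ^ m = 0 := by
        have h := minpoly.aeval ℂ D
        rw [hXm, map_pow, Polynomial.aeval_X] at h
        exact h
      have hzero : deriv^[m] f = 0 := by
        have h2 : (((D ^ m) (⟨f, hfV⟩ : V) : ℝ → ℂ)) = 0 := by
          rw [hnil]; rfl
        rwa [hpow] at h2
      have hmemk : ∀ k, deriv^[k] f ∈ V := by
        intro k
        have := ((D ^ k) (⟨f, hfV⟩ : V)).2
        rwa [hpow] at this
      -- find the largest k with deriv^[k] f ≠ 0
      have hP : ∃ j, deriv^[j] f = 0 := ⟨m, hzero⟩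
      set k := Nat.find hP with hk
      have hk0 : deriv^[k] f = 0 := Nat.find_spec hP
      have hP0 : ¬ deriv^[0] f = 0 := by
        intro h
        exact hfc ⟨0, by simp at h; exact h⟩
      have hP1 : ¬ deriv^[1] f = 0 := by
        intro h
        apply hfc
        refine ⟨f 0, funext fun x => ?_⟩
        exact const_of_deriv_zero (hdiff f hfV) (fun y => by
          have := congrFun h y; simpa using this) x
      have hk2 : 2 ≤ k := by
        rcases Nat.lt_or_ge k 2 with h | h
        · interval_cases k
          · exact absurd hk0 hP0
          · exact absurd hk0 hP1
        · exact h
      have hkm : deriv^[k - 1] f ≠ 0 := Nat.find_min hP (by omega)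
      obtain ⟨j, hj⟩ : ∃ j, k = j + 2 := ⟨k - 2, by omega⟩
      rw [hj] at hk0
      have hne : deriv^[j + 1] f ≠ 0 := by
        rw [hj] at hkm
        simpa using hkm
      set g := deriv^[j] f with hgdef
      have hgV : g ∈ V := hmemk j
      have hg'V : deriv g ∈ V := by
        have := hmemk (j + 1)
        rwa [Function.iterate_succ_apply'] at this
      have hg'' : ∀ x, deriv (deriv g) x = 0 := by
        intro x
        have : deriv^[j + 2] f = 0 := hk0
        rw [show j + 2 = (j + 1) + 1 from rfl, Function.iterate_succ_apply',
          Function.iterate_succ_apply'] at this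
        exact congrFun this x
      set b := deriv g 0 with hb
      have hgconst : ∀ x, deriv g x = b := fun x =>
        const_of_deriv_zero (hdiff _ hg'V) hg'' x
      have hbne : b ≠ 0 := by
        intro h0
        apply hne
        rw [Function.iterate_succ_apply', ← hgdef]
        funext x
        rw [hgconst x, h0]; rfl
      refine ⟨g 0, b, hbne, ?_⟩
      have : (fun z : ℝ => g 0 + b * (z : ℂ)) = g := by
        funext x
        have hd : ∀ y : ℝ, HasDerivAt (fun z : ℝ => g z - b * (z : ℂ)) 0 y := by
          intro y
          have h1 : HasDerivAt (fun z : ℝ => (z : ℂ)) 1 y := by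
            exact Complex.ofRealCLM.hasDerivAt
          have h2 := ((hdiff g hgV y).hasDerivAt).sub (h1.const_mul b)
          have : deriv g y - b * 1 = 0 := by rw [hgconst y]; ring
          rwa [this] at h2
        have := const_of_deriv_zero (g := fun z : ℝ => g z - b * (z : ℂ))
          (fun z => (hd z).differentiableAt) (fun z => (hd z).deriv) x
        simp only [Complex.ofReal_zero, mul_zero, sub_zero] at this
        linear_combination -this
      rw [this]
      exact hgV
  · rintro (⟨μ, hμ0, hmem⟩ | ⟨a, b, hb0, hmem⟩)
    · refine ⟨_, hmem, ?_⟩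
      rintro ⟨c, hc⟩
      have h1 := (exp_hasDerivAt μ 0).deriv
      rw [hc] at h1
      simp at h1
      exact hμ0 h1.symm
    · refine ⟨_, hmem, ?_⟩
      rintro ⟨c, hc⟩
      have h0 := congrFun hc 0
      have h1 := congrFun hc 1
      simp at h0 h1
      apply hb0
      linear_combination h1 - h0
end

section
/- Let V be a finite-dimensional space of smooth functions ℝ^g → ℂ that is closed under each partial derivative ∂/∂z_s, s = 1, …, g. Then every f ∈ V is a finite linear combination of functions of the form z_1^{j_1} ⋯ z_g^{j_g} · exp(λ_1 z_1 + ⋯ + λ_g z_g) with λ_s ∈ ℂ and j_s bounded by dim V. -/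
open Complex Finset

namespace SP10

noncomputable def pd (g : ℕ) (s : Fin g) (f : (Fin g → ℝ) → ℂ) : (Fin g → ℝ) → ℂ :=
  fun z => fderiv ℝ f z (Pi.single s 1)

lemma pd_smooth {g : ℕ} {f : (Fin g → ℝ) → ℂ} (hf : ContDiff ℝ (⊤ : ℕ∞) f) (s : Fin g) :
    ContDiff ℝ (⊤ : ℕ∞) (pd g s f) := by
  show ContDiff ℝ (⊤ : ℕ∞) ((ContinuousLinearMap.apply ℝ ℂ (Pi.single s 1)) ∘ (fderiv ℝ f))
  exact (ContinuousLinearMap.apply ℝ ℂ (Pi.single s 1)).contDiff.comp (hf.fderiv_right (m := ((⊤ : ℕ∞) : WithTop ℕ∞)) (by exact_mod_cast le_top))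

lemma hasFDerivAt_pd {g : ℕ} {f : (Fin g → ℝ) → ℂ} (hf : ContDiff ℝ (⊤ : ℕ∞) f) (t : Fin g)
    (z : Fin g → ℝ) :
    HasFDerivAt (pd g t f)
      ((ContinuousLinearMap.apply ℝ ℂ (Pi.single t 1)).comp (fderiv ℝ (fderiv ℝ f) z)) z := by
  show HasFDerivAt ((ContinuousLinearMap.apply ℝ ℂ (Pi.single t 1)) ∘ (fderiv ℝ f)) _ z
  exact (ContinuousLinearMap.apply ℝ ℂ (Pi.single t 1)).hasFDerivAt.comp z
    (((hf.fderiv_right (WithTop.coe_le_coe.mpr le_top : (1 : WithTop ℕ∞) + 1 ≤ ((⊤ : ℕ∞) : WithTop ℕ∞))).differentiable one_ne_zero) z).hasFDerivAt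

lemma pd_pd_eq {g : ℕ} {f : (Fin g → ℝ) → ℂ} (hf : ContDiff ℝ (⊤ : ℕ∞) f) (s t : Fin g)
    (z : Fin g → ℝ) :
    pd g s (pd g t f) z = fderiv ℝ (fderiv ℝ f) z (Pi.single s 1) (Pi.single t 1) := by
  have h := (hasFDerivAt_pd hf t z).fderiv
  show fderiv ℝ (pd g t f) z (Pi.single s 1) = _
  rw [h]; rfl

lemma pd_comm {g : ℕ} {f : (Fin g → ℝ) → ℂ} (hf : ContDiff ℝ (⊤ : ℕ∞) f) (s t : Fin g) :
    pd g s (pd g t f) = pd g t (pd g s f) := by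
  funext z
  rw [pd_pd_eq hf s t z, pd_pd_eq hf t s z]
  exact second_derivative_symmetric
    (fun x => ((hf.differentiable (by simp)) x).hasFDerivAt)
    ((((hf.fderiv_right (WithTop.coe_le_coe.mpr le_top : (1 : WithTop ℕ∞) + 1 ≤ ((⊤ : ℕ∞) : WithTop ℕ∞))).differentiable one_ne_zero) z).hasFDerivAt) _ _

lemma pd_iter_smooth {g : ℕ} {f : (Fin g → ℝ) → ℂ} (hf : ContDiff ℝ (⊤ : ℕ∞) f) (s : Fin g) :
    ∀ n, ContDiff ℝ (⊤ : ℕ∞) ((pd g s)^[n] f)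
  | 0 => hf
  | (n+1) => by
      rw [Function.iterate_succ_apply']
      exact pd_smooth (pd_iter_smooth hf s n) s

lemma pd_iter_comm {g : ℕ} {f : (Fin g → ℝ) → ℂ} (hf : ContDiff ℝ (⊤ : ℕ∞) f) (s t : Fin g) :
    ∀ n, (pd g s)^[n] (pd g t f) = pd g t ((pd g s)^[n] f)
  | 0 => rfl
  | (n+1) => by
      rw [Function.iterate_succ_apply', pd_iter_comm hf s t n,
        pd_comm (pd_iter_smooth hf s n) s t, Function.iterate_succ_apply' (pd g s) n f]

noncomputable def Lclm (g : ℕ) (lam : Fin g → ℂ) : (Fin g → ℝ) →L[ℝ] ℂ :=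
  ∑ u, lam u • (Complex.ofRealCLM.comp (ContinuousLinearMap.proj u))

lemma Lclm_apply (g : ℕ) (lam : Fin g → ℂ) (z : Fin g → ℝ) :
    Lclm g lam z = ∑ u, lam u * (z u : ℂ) := by
  simp [Lclm, ContinuousLinearMap.sum_apply, smul_eq_mul]

lemma Lclm_single (g : ℕ) (lam : Fin g → ℂ) (s : Fin g) :
    Lclm g lam (Pi.single s 1) = lam s := by
  rw [Lclm_apply]
  rw [Finset.sum_eq_single s]
  · simp
  · intro u _ hu; simp [Pi.single_apply, hu]
  · simp

noncomputable def Efun (g : ℕ) (s : Fin g) (μ : ℂ) (φ : (Fin g → ℝ) → ℂ) :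
    (Fin g → ℝ) → ℂ :=
  fun z => pd g s φ z - μ * φ z

lemma Efun_smooth {g : ℕ} {φ : (Fin g → ℝ) → ℂ} (hφ : ContDiff ℝ (⊤ : ℕ∞) φ) (s : Fin g) (μ : ℂ) :
    ContDiff ℝ (⊤ : ℕ∞) (Efun g s μ φ) :=
  (pd_smooth hφ s).sub (contDiff_const.mul hφ)

lemma Efun_iter_smooth {g : ℕ} {φ : (Fin g → ℝ) → ℂ} (hφ : ContDiff ℝ (⊤ : ℕ∞) φ) (s : Fin g)
    (μ : ℂ) : ∀ n, ContDiff ℝ (⊤ : ℕ∞) ((Efun g s μ)^[n] φ)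
  | 0 => hφ
  | (n+1) => by
      rw [Function.iterate_succ_apply']
      exact Efun_smooth (Efun_iter_smooth hφ s μ n) s μ

lemma pd_exp_mul {g : ℕ} (lam : Fin g → ℂ) {φ : (Fin g → ℝ) → ℂ} (hφ : ContDiff ℝ (⊤ : ℕ∞) φ)
    (s : Fin g) :
    pd g s (fun z => Complex.exp (Lclm g lam z) * φ z)
      = fun z => Complex.exp (Lclm g lam z) * (lam s * φ z + pd g s φ z) := by
  funext z
  have hexp : HasFDerivAt (fun z => Complex.exp (Lclm g lam z))
      (Complex.exp (Lclm g lam z) • (Lclm g lam)) z :=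
    (Lclm g lam).hasFDerivAt.cexp
  have hφ' : HasFDerivAt φ (fderiv ℝ φ z) z := ((hφ.differentiable (by simp)) z).hasFDerivAt
  have hmul := hexp.mul hφ'
  have : pd g s (fun z => Complex.exp (Lclm g lam z) * φ z) z
      = (Complex.exp (Lclm g lam z) • fderiv ℝ φ z
          + φ z • (Complex.exp (Lclm g lam z) • (Lclm g lam))) (Pi.single s 1) := by
    show fderiv ℝ (fun z => Complex.exp (Lclm g lam z) * φ z) z (Pi.single s 1) = _
    exact congrArg (fun L => L (Pi.single s 1)) hmul.fderiv
  rw [this]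
  simp only [ContinuousLinearMap.add_apply, ContinuousLinearMap.smul_apply, Lclm_single,
    smul_eq_mul]
  simp only [pd]
  ring

lemma pd_iter_exp {g : ℕ} (lam : Fin g → ℂ) (s : Fin g) :
    ∀ (n : ℕ) (f : (Fin g → ℝ) → ℂ), ContDiff ℝ (⊤ : ℕ∞) f →
      (pd g s)^[n] (fun z => Complex.exp (Lclm g (-lam) z) * f z)
        = fun z => Complex.exp (Lclm g (-lam) z) * ((Efun g s (lam s))^[n] f z)
  | 0, f, _ => rfl
  | (n+1), f, hf => by
      rw [Function.iterate_succ_apply, pd_exp_mul (-lam) hf s]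
      have h1 : (fun z => Complex.exp (Lclm g (-lam) z) * ((-lam) s * f z + pd g s f z))
          = fun z => Complex.exp (Lclm g (-lam) z) * (Efun g s (lam s) f z) := by
        funext z; simp [Efun]; ring
      rw [h1, pd_iter_exp lam s n (Efun g s (lam s) f) (Efun_smooth hf s (lam s))]
      funext z
      rw [Function.iterate_succ_apply]

lemma deriv_smooth {u : ℝ → ℂ} (hu : ContDiff ℝ (⊤ : ℕ∞) u) : ContDiff ℝ (⊤ : ℕ∞) (deriv u) := by
  show ContDiff ℝ (⊤ : ℕ∞) ((ContinuousLinearMap.apply ℝ ℂ (1:ℝ)) ∘ (fderiv ℝ u))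
  exact (ContinuousLinearMap.apply ℝ ℂ (1:ℝ)).contDiff.comp (hu.fderiv_right (by simp))

lemma oneDim : ∀ (n : ℕ) (u : ℝ → ℂ), ContDiff ℝ (⊤ : ℕ∞) u → (∀ t, deriv^[n] u t = 0) →
    ∀ t : ℝ, u t = ∑ j ∈ Finset.range n, deriv^[j] u 0 * t ^ j / (Nat.factorial j) := by
  intro n
  induction n with
  | zero => intro u _ h0 t; simpa using h0 t
  | succ n ih =>
    intro u hu h0 t
    have hd : ContDiff ℝ (⊤ : ℕ∞) (deriv u) := deriv_smooth hu
    have h0' : ∀ t, deriv^[n] (deriv u) t = 0 := by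
      intro t
      have := h0 t
      rwa [Function.iterate_succ_apply] at this
    have hder := ih (deriv u) hd h0'
    set w : ℝ → ℂ := fun t => ∑ j ∈ Finset.range n,
      deriv^[j+1] u 0 / (Nat.factorial (j+1)) * t ^ (j+1) with hw_def
    have hwHas : ∀ t : ℝ, HasDerivAt w (∑ j ∈ Finset.range n,
        deriv^[j+1] u 0 / (Nat.factorial (j+1)) * ((j+1) * (t:ℂ)^j)) t := by
      intro t
      apply HasDerivAt.fun_sum
      intro j _
      have hcoe : HasDerivAt (fun t : ℝ => (t:ℂ)) 1 t := by
        simpa using (hasDerivAt_id t).ofReal_comp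
      have hpow := (hasDerivAt_pow (j+1) ((t:ℝ) : ℂ)).comp t hcoe
      have := hpow.const_mul (deriv^[j+1] u 0 / (Nat.factorial (j+1)))
      convert this using 1
      push_cast
      rfl
      rfl
      rw [Nat.add_sub_cancel]
      push_cast
      ring
    have hwdiff : Differentiable ℝ w := fun t => (hwHas t).differentiableAt
    have hwderiv : ∀ t, deriv w t = deriv u t := by
      intro t
      rw [(hwHas t).deriv, hder t]
      apply Finset.sum_congr rfl
      intro j _
      rw [show deriv^[j+1] u = deriv^[j] (deriv u) from Function.iterate_succ_apply deriv j u]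
      have h1 : (Nat.factorial j : ℂ) ≠ 0 := by
        exact_mod_cast Nat.factorial_ne_zero j
      have h2 : ((j : ℂ) + 1) ≠ 0 := Nat.cast_add_one_ne_zero j
      have hfac : ((Nat.factorial (j+1) : ℂ)) = ((j:ℂ)+1) * (Nat.factorial j : ℂ) := by
        rw [Nat.factorial_succ]; push_cast; ring
      field_simp [hfac]
      rw [hfac]
      ring
    have hconst : u t - w t = u 0 - w 0 := by
      apply is_const_of_deriv_eq_zero ((hu.differentiable (by simp)).sub hwdiff)
      intro x
      rw [deriv_sub ((hu.differentiable (by simp)) x) (hwdiff x), hwderiv x, sub_self]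
    have hw0 : w 0 = 0 := by
      rw [hw_def]
      simp
    have hut : u t = u 0 + w t := by
      rw [hw0, sub_zero] at hconst
      linear_combination hconst
    rw [hut, Finset.sum_range_succ']
    simp only [Function.iterate_zero_apply, pow_zero, Nat.factorial_zero, Nat.cast_one,
      mul_one, div_one]
    rw [add_comm]
    congr 1
    rw [hw_def]
    apply Finset.sum_congr rfl
    intro j _
    ring

lemma pd_zero {g : ℕ} (s : Fin g) : pd g s (0 : (Fin g → ℝ) → ℂ) = 0 := by
  funext z
  show fderiv ℝ (fun _ => (0:ℂ)) z (Pi.single s 1) = 0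
  rw [fderiv_fun_const]
  rfl

lemma pd_iter_zero {g : ℕ} (s : Fin g) : ∀ n, (pd g s)^[n] (0 : (Fin g → ℝ) → ℂ) = 0
  | 0 => rfl
  | (n+1) => by rw [Function.iterate_succ_apply, pd_zero, pd_iter_zero s n]

lemma pd_iter_iter_comm {g : ℕ} (a b : Fin g) :
    ∀ (j : ℕ) (f : (Fin g → ℝ) → ℂ), ContDiff ℝ (⊤ : ℕ∞) f → ∀ n,
      (pd g a)^[n] ((pd g b)^[j] f) = (pd g b)^[j] ((pd g a)^[n] f)
  | 0, f, _, n => rfl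
  | (j+1), f, hf, n => by
      rw [Function.iterate_succ_apply, Function.iterate_succ_apply,
        pd_iter_iter_comm a b j (pd g b f) (pd_smooth hf b) n, pd_iter_comm hf a b n]

lemma snoc_line (g : ℕ) (z' : Fin g → ℝ) (t : ℝ) :
    (Fin.snoc z' t : Fin (g+1) → ℝ)
      = (Fin.snoc z' 0 : Fin (g+1) → ℝ) + t • (Pi.single (Fin.last g) 1 : Fin (g+1) → ℝ) := by
  funext i
  refine Fin.lastCases ?_ (fun s => ?_) i
  · simp
  · have hne : (Fin.castSucc s) ≠ Fin.last g := (Fin.castSucc_lt_last s).ne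
    simp [Pi.single_eq_of_ne hne]

lemma line_smooth {g : ℕ} (z' : Fin g → ℝ) :
    ContDiff ℝ (⊤ : ℕ∞) (fun t : ℝ => (Fin.snoc z' t : Fin (g+1) → ℝ)) := by
  have : (fun t : ℝ => (Fin.snoc z' t : Fin (g+1) → ℝ))
      = fun t => (Fin.snoc z' 0 : Fin (g+1) → ℝ) + t • (Pi.single (Fin.last g) 1 : Fin (g+1) → ℝ) :=
    funext (snoc_line g z')
  rw [this]
  exact contDiff_const.add (contDiff_id.smul contDiff_const)

lemma hasDerivAt_line (g : ℕ) (z' : Fin g → ℝ) (t : ℝ) :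
    HasDerivAt (fun t : ℝ => (Fin.snoc z' t : Fin (g+1) → ℝ))
      (Pi.single (Fin.last g) 1) t := by
  have heq : (fun t : ℝ => (Fin.snoc z' t : Fin (g+1) → ℝ))
      = fun t => (Fin.snoc z' 0 : Fin (g+1) → ℝ) + t • (Pi.single (Fin.last g) 1 : Fin (g+1) → ℝ) :=
    funext (snoc_line g z')
  rw [heq]
  simpa using ((hasDerivAt_id t).smul_const
    ((Pi.single (Fin.last g) 1 : Fin (g+1) → ℝ))).const_add ((Fin.snoc z' 0 : Fin (g+1) → ℝ))

lemma deriv_iter_line {g : ℕ} {h : (Fin (g+1) → ℝ) → ℂ} (hh : ContDiff ℝ (⊤ : ℕ∞) h) :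
    ∀ (j : ℕ) (z' : Fin g → ℝ) (t : ℝ),
      deriv^[j] (fun t => h (Fin.snoc z' t)) t
        = (pd (g+1) (Fin.last g))^[j] h (Fin.snoc z' t)
  | 0, z', t => rfl
  | (j+1), z', t => by
      rw [Function.iterate_succ_apply']
      have hIH : deriv^[j] (fun t => h (Fin.snoc z' t))
          = fun t => (pd (g+1) (Fin.last g))^[j] h (Fin.snoc z' t) := by
        funext t; exact deriv_iter_line hh j z' t
      rw [hIH]
      have hH : ContDiff ℝ (⊤ : ℕ∞) ((pd (g+1) (Fin.last g))^[j] h) := pd_iter_smooth hh _ j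
      have hfd := (((hH.differentiable (by simp)) (Fin.snoc z' t)).hasFDerivAt).comp_hasDerivAt
        t (hasDerivAt_line g z' t)
      have h2 : HasDerivAt (fun t : ℝ => (pd (g+1) (Fin.last g))^[j] h (Fin.snoc z' t))
          (fderiv ℝ ((pd (g+1) (Fin.last g))^[j] h) (Fin.snoc z' t)
            (Pi.single (Fin.last g) 1)) t := hfd
      rw [Function.iterate_succ_apply' (pd (g+1) (Fin.last g)) j h]
      exact h2.deriv

noncomputable def Jmap (g : ℕ) : (Fin g → ℝ) →L[ℝ] (Fin (g+1) → ℝ) :=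
  ContinuousLinearMap.pi (fun i => Fin.lastCases 0 (fun s => ContinuousLinearMap.proj s) i)

lemma Jmap_apply (g : ℕ) (z' : Fin g → ℝ) : Jmap g z' = Fin.snoc z' 0 := by
  funext i
  refine Fin.lastCases ?_ (fun s => ?_) i
  · simp [Jmap]
  · simp [Jmap]

lemma Jmap_single (g : ℕ) (s : Fin g) :
    Jmap g (Pi.single s 1) = Pi.single s.castSucc 1 := by
  funext i
  refine Fin.lastCases ?_ (fun u => ?_) i
  · have hne : (Fin.castSucc s) ≠ Fin.last g := (Fin.castSucc_lt_last s).ne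
    simp [Jmap, Pi.single_eq_of_ne hne.symm]
  · by_cases hu : u = s
    · subst hu; simp [Jmap]
    · have h1 : (Fin.castSucc u) ≠ Fin.castSucc s := by
        simpa [Fin.castSucc_inj] using hu
      simp [Jmap, Pi.single_eq_of_ne hu, Pi.single_eq_of_ne h1]

lemma comp_snoc_smooth {g : ℕ} {w : (Fin (g+1) → ℝ) → ℂ} (hw : ContDiff ℝ (⊤ : ℕ∞) w) :
    ContDiff ℝ (⊤ : ℕ∞) (fun z' : Fin g → ℝ => w (Fin.snoc z' 0)) := by
  have heq : (fun z' : Fin g → ℝ => w (Fin.snoc z' (0:ℝ))) = w ∘ (Jmap g) := by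
    funext x; simp [Function.comp, Jmap_apply]
  rw [heq]
  exact hw.comp (Jmap g).contDiff

lemma pd_comp_snoc {g : ℕ} {w : (Fin (g+1) → ℝ) → ℂ} (hw : ContDiff ℝ (⊤ : ℕ∞) w) (s : Fin g) :
    pd g s (fun z' => w (Fin.snoc z' 0))
      = fun z' => pd (g+1) s.castSucc w (Fin.snoc z' 0) := by
  funext z'
  have heq : (fun z' : Fin g → ℝ => w (Fin.snoc z' (0:ℝ))) = w ∘ (Jmap g) := by
    funext x; simp [Function.comp, Jmap_apply]
  have hcomp : HasFDerivAt (w ∘ (Jmap g))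
      ((fderiv ℝ w (Jmap g z')).comp (Jmap g)) z' :=
    ((hw.differentiable (by simp)) _).hasFDerivAt.comp z' (Jmap g).hasFDerivAt
  show fderiv ℝ (fun z' => w (Fin.snoc z' 0)) z' (Pi.single s 1) = _
  rw [heq, hcomp.fderiv]
  show fderiv ℝ w (Jmap g z') (Jmap g (Pi.single s 1)) = _
  rw [Jmap_single, Jmap_apply]
  rfl

lemma pd_iter_comp_snoc {g : ℕ} {w : (Fin (g+1) → ℝ) → ℂ} (hw : ContDiff ℝ (⊤ : ℕ∞) w) (s : Fin g) :
    ∀ n, (pd g s)^[n] (fun z' => w (Fin.snoc z' 0))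
      = fun z' => (pd (g+1) s.castSucc)^[n] w (Fin.snoc z' 0)
  | 0 => rfl
  | (n+1) => by
      rw [Function.iterate_succ_apply', pd_iter_comp_snoc hw s n,
        pd_comp_snoc (pd_iter_smooth hw s.castSucc n) s]
      funext z'
      rw [Function.iterate_succ_apply' (pd (g+1) s.castSucc) n w]

lemma multiPoly : ∀ (g : ℕ) (n : ℕ) (h : (Fin g → ℝ) → ℂ), ContDiff ℝ (⊤ : ℕ∞) h →
    (∀ s : Fin g, (pd g s)^[n] h = 0) →
    ∃ c : (Fin g → Fin n) → ℂ, ∀ z, h z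
      = ∑ m : Fin g → Fin n, c m * ∏ s, (z s : ℂ) ^ (m s : ℕ) := by
  intro g
  induction g with
  | zero =>
    intro n h _ _
    refine ⟨fun _ => h default, fun z => ?_⟩
    rw [Subsingleton.elim z default]
    rw [Fintype.sum_eq_single (default : Fin 0 → Fin n) (fun m hm => absurd (Subsingleton.elim m default) hm)]
    simp
  | succ g ih =>
    intro n h hh hkill
    -- coefficient functions
    set W : ℕ → (Fin g → ℝ) → ℂ := fun j z' =>
      ((pd (g+1) (Fin.last g))^[j] h) (Fin.snoc z' 0) with hW
    have hWsmooth : ∀ j, ContDiff ℝ (⊤ : ℕ∞) (W j) := fun j =>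
      comp_snoc_smooth (pd_iter_smooth hh _ j)
    have hWkill : ∀ j, ∀ s : Fin g, (pd g s)^[n] (W j) = 0 := by
      intro j s
      rw [hW]
      rw [pd_iter_comp_snoc (pd_iter_smooth hh _ j) s n]
      have hcomm := pd_iter_iter_comm s.castSucc (Fin.last g) j h hh n
      rw [hcomm, hkill s.castSucc, pd_iter_zero (Fin.last g) j]
      rfl
    have hex : ∀ j : ℕ, ∃ c : (Fin g → Fin n) → ℂ, ∀ z', W j z'
        = ∑ m : Fin g → Fin n, c m * ∏ s, (z' s : ℂ) ^ (m s : ℕ) := fun j =>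
      ih n (W j) (hWsmooth j) (hWkill j)
    choose C hC using hex
    refine ⟨fun m => C (m (Fin.last g) : ℕ) (Fin.init m)
      / (Nat.factorial (m (Fin.last g))), fun z => ?_⟩
    -- 1-D Taylor in the last variable
    have hu : ContDiff ℝ (⊤ : ℕ∞) (fun t => h (Fin.snoc (Fin.init z) t)) :=
      hh.comp (line_smooth (Fin.init z))
    have hukill : ∀ t, deriv^[n] (fun t => h (Fin.snoc (Fin.init z) t)) t = 0 := by
      intro t
      rw [deriv_iter_line hh n (Fin.init z) t, hkill (Fin.last g)]
      rfl
    have htay := oneDim n (fun t => h (Fin.snoc (Fin.init z) t)) hu hukill (z (Fin.last g))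
    have hz : h z = h (Fin.snoc (Fin.init z) (z (Fin.last g))) := by
      rw [Fin.snoc_init_self]
    rw [hz, htay]
    -- rewrite Taylor coefficients using W and C
    have hterm : ∀ j ∈ Finset.range n,
        deriv^[j] (fun t => h (Fin.snoc (Fin.init z) t)) 0 * (z (Fin.last g) : ℂ) ^ j
          / (Nat.factorial j)
        = ∑ m : Fin g → Fin n, (C j m / (Nat.factorial j)) * (∏ s, ((Fin.init z) s : ℂ) ^ (m s : ℕ))
            * (z (Fin.last g) : ℂ) ^ j := by
      intro j _
      rw [deriv_iter_line hh j (Fin.init z) 0]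
      have : ((pd (g+1) (Fin.last g))^[j] h) (Fin.snoc (Fin.init z) 0) = W j (Fin.init z) := rfl
      rw [this, hC j (Fin.init z), Finset.sum_mul, Finset.sum_div]
      apply Finset.sum_congr rfl
      intro m _
      ring
    rw [Finset.sum_congr rfl hterm]
    have hre : (∑ m : Fin (g+1) → Fin n,
        (C ((m (Fin.last g) : ℕ)) (Fin.init m) / (Nat.factorial (m (Fin.last g)))) *
          ∏ s : Fin (g+1), (z s : ℂ) ^ (m s : ℕ))
        = ∑ p : Fin n × (Fin g → Fin n),
          ((C (p.1 : ℕ) p.2 / (Nat.factorial (p.1 : ℕ)))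
              * ∏ s : Fin g, ((Fin.init z) s : ℂ) ^ (p.2 s : ℕ))
            * (z (Fin.last g) : ℂ) ^ (p.1 : ℕ) := by
      apply Fintype.sum_equiv ((Fin.snocEquiv (fun _ : Fin (g+1) => Fin n)).symm)
      intro m
      simp only [Fin.snocEquiv, Equiv.symm, Equiv.coe_fn_mk]
      rw [Fin.prod_univ_castSucc (fun s : Fin (g+1) => (z s : ℂ) ^ (m s : ℕ))]
      simp only [Fin.init]
      ring
    rw [hre, Fintype.sum_prod_type,
      ← Fin.sum_univ_eq_sum_range (fun x : ℕ => ∑ m : Fin g → Fin n,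
        (C x m / (Nat.factorial x) * ∏ s : Fin g, ((Fin.init z) s : ℂ) ^ (m s : ℕ))
          * (z (Fin.last g) : ℂ) ^ x) n]

lemma piece {g : ℕ} (n : ℕ) (f : (Fin g → ℝ) → ℂ) (lam : Fin g → ℂ)
    (hf : ContDiff ℝ (⊤ : ℕ∞) f)
    (hkill : ∀ s : Fin g, (Efun g s (lam s))^[n] f = 0) :
    ∃ c : (Fin g → Fin n) → ℂ, ∀ z, f z
      = ∑ m : Fin g → Fin n, c m * (∏ s, (z s : ℂ) ^ (m s : ℕ))
          * Complex.exp (∑ s, lam s * (z s : ℂ)) := by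
  set h : (Fin g → ℝ) → ℂ := fun z => Complex.exp (Lclm g (-lam) z) * f z with hh
  have hexp : ContDiff ℝ (⊤ : ℕ∞) (fun z => Complex.exp (Lclm g (-lam) z)) :=
    Complex.contDiff_exp.comp (Lclm g (-lam)).contDiff
  have hhsmooth : ContDiff ℝ (⊤ : ℕ∞) h := hexp.mul hf
  have hhkill : ∀ s : Fin g, (pd g s)^[n] h = 0 := by
    intro s
    rw [hh, pd_iter_exp lam s n f hf, hkill s]
    funext z
    simp
  obtain ⟨c, hc⟩ := multiPoly g n h hhsmooth hhkill
  refine ⟨c, fun z => ?_⟩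
  have hfz : f z = Complex.exp (Lclm g lam z) * h z := by
    rw [hh]
    rw [← mul_assoc, ← Complex.exp_add]
    have hzero : Lclm g lam z + Lclm g (-lam) z = 0 := by
      rw [Lclm_apply, Lclm_apply, ← Finset.sum_add_distrib]
      apply Finset.sum_eq_zero
      intro u _
      simp
    rw [hzero, Complex.exp_zero, one_mul]
  rw [hfz, hc z, Finset.mul_sum]
  apply Finset.sum_congr rfl
  intro m _
  rw [Lclm_apply]
  ring

section Main

variable {g : ℕ} (V : Submodule ℂ ((Fin g → ℝ) → ℂ))
  (hsmooth : ∀ f ∈ V, ContDiff ℝ (⊤ : ℕ∞) f)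
  (hD : ∀ f ∈ V, ∀ s : Fin g, (fun z => fderiv ℝ f z (Pi.single s 1)) ∈ V)

noncomputable def Top (hsmooth : ∀ f ∈ V, ContDiff ℝ (⊤ : ℕ∞) f)
    (hD : ∀ f ∈ V, ∀ s : Fin g, (fun z => fderiv ℝ f z (Pi.single s 1)) ∈ V) (s : Fin g) : Module.End ℂ V where
  toFun v := ⟨pd g s (v : (Fin g → ℝ) → ℂ), hD v v.2 s⟩
  map_add' u v := by
    ext z
    have hu : DifferentiableAt ℝ (u : (Fin g → ℝ) → ℂ) z :=
      ((hsmooth u u.2).differentiable (by simp)) z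
    have hv : DifferentiableAt ℝ (v : (Fin g → ℝ) → ℂ) z :=
      ((hsmooth v v.2).differentiable (by simp)) z
    show fderiv ℝ ((u : (Fin g → ℝ) → ℂ) + (v : (Fin g → ℝ) → ℂ)) z (Pi.single s 1) = _
    rw [fderiv_add hu hv]
    rfl
  map_smul' a v := by
    ext z
    have hv : DifferentiableAt ℝ (v : (Fin g → ℝ) → ℂ) z :=
      ((hsmooth v v.2).differentiable (by simp)) z
    show fderiv ℝ (a • (v : (Fin g → ℝ) → ℂ)) z (Pi.single s 1) = _
    rw [fderiv_const_smul hv a]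
    rfl

lemma Top_sub_pow_coe (s : Fin g) (μ : ℂ) : ∀ (k : ℕ) (v : V),
    ((((Top V hsmooth hD s - μ • 1) ^ k) v : V) : (Fin g → ℝ) → ℂ)
      = (Efun g s μ)^[k] (v : (Fin g → ℝ) → ℂ)
  | 0, v => rfl
  | (k+1), v => by
      have h1 : ∀ w : V, (((Top V hsmooth hD s - μ • 1) w : V) : (Fin g → ℝ) → ℂ)
          = Efun g s μ (w : (Fin g → ℝ) → ℂ) := by
        intro w
        funext z
        show (pd g s (w : (Fin g → ℝ) → ℂ) z) - (μ • (w : (Fin g → ℝ) → ℂ)) z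
          = Efun g s μ (w : (Fin g → ℝ) → ℂ) z
        simp [Efun]
      rw [pow_succ', Module.End.mul_apply, h1, Top_sub_pow_coe s μ k,
        Function.iterate_succ_apply' (Efun g s μ) k ((v : (Fin g → ℝ) → ℂ))]

end Main

end SP10

/-- Elements of a finite-dimensional space of smooth functions `ℝ^g → ℂ` closed
under all partial derivatives are exponential-polynomials: finite linear
combinations of `z₁^{j₁} ⋯ z_g^{j_g} · exp (λ₁ z₁ + ⋯ + λ_g z_g)` with the `j_s`
bounded by `dim V`. -/
theorem stmt10 (g : ℕ) (V : Submodule ℂ ((Fin g → ℝ) → ℂ)) [FiniteDimensional ℂ V]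
    (hsmooth : ∀ f ∈ V, ContDiff ℝ (⊤ : ℕ∞) f)
    (hD : ∀ f ∈ V, ∀ s : Fin g, (fun z => fderiv ℝ f z (Pi.single s 1)) ∈ V) :
    ∀ f ∈ V, ∃ (S : Finset ((Fin g → ℂ) × (Fin g → ℕ)))
      (c : (Fin g → ℂ) × (Fin g → ℕ) → ℂ),
      (∀ p ∈ S, ∀ s, p.2 s ≤ Module.finrank ℂ V) ∧
      ∀ z : Fin g → ℝ, f z =
        ∑ p ∈ S, c p * (∏ s, (z s : ℂ) ^ p.2 s) * Complex.exp (∑ s, p.1 s * z s) := by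
  classical
  intro f hf
  set N := Module.finrank ℂ V with hN
  set T : Fin g → Module.End ℂ V := SP10.Top V hsmooth hD with hT
  have hcomm : Pairwise fun i j => Commute (T i) (T j) := by
    intro i j _
    apply LinearMap.ext
    intro v
    apply Subtype.ext
    rw [Module.End.mul_apply, Module.End.mul_apply]
    show SP10.pd g i (SP10.pd g j (v : (Fin g → ℝ) → ℂ))
      = SP10.pd g j (SP10.pd g i (v : (Fin g → ℝ) → ℂ))
    exact SP10.pd_comm (hsmooth _ v.2) i j
  have hdecomp :=
    Module.End.iSup_iInf_maxGenEigenspace_eq_top_of_iSup_maxGenEigenspace_eq_top_of_commute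
      T hcomm (fun i => Module.End.iSup_maxGenEigenspace_eq_top (T i))
  have hmem : (⟨f, hf⟩ : V) ∈ ⨆ χ : Fin g → ℂ, ⨅ s, (T s).maxGenEigenspace (χ s) := by
    rw [hdecomp]; trivial
  rw [Submodule.mem_iSup_iff_exists_finsupp] at hmem
  obtain ⟨a, ha, hsum⟩ := hmem
  have hkill : ∀ (χ : Fin g → ℂ) (s : Fin g), (((T s - χ s • 1) ^ (N+1)) (a χ)) = 0 := by
    intro χ s
    have h1 : a χ ∈ (T s).maxGenEigenspace (χ s) := (Submodule.mem_iInf _).1 (ha χ) s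
    have h2 : a χ ∈ (T s).genEigenspace (χ s) (N : ℕ∞) :=
      Module.End.genEigenspace_le_genEigenspace_finrank (T s) (χ s) ⊤ h1
    rw [Module.End.mem_genEigenspace] at h2
    obtain ⟨l, hlN, hl⟩ := h2
    rw [LinearMap.mem_ker] at hl
    have hlN' : l ≤ N := by exact_mod_cast hlN
    have hexp : N + 1 - l + l = N + 1 := by omega
    rw [← hexp, pow_add, Module.End.mul_apply, hl, map_zero]
  have hEkill : ∀ χ : Fin g → ℂ, ∀ s : Fin g,
      (SP10.Efun g s (χ s))^[N+1] ((a χ : (Fin g → ℝ) → ℂ)) = 0 := by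
    intro χ s
    have h0 := SP10.Top_sub_pow_coe V hsmooth hD s (χ s) (N+1) (a χ)
    rw [← h0, hkill χ s]
    rfl
  have hpieces := fun χ : Fin g → ℂ =>
    SP10.piece (N+1) ((a χ : (Fin g → ℝ) → ℂ)) χ (hsmooth _ (a χ).2) (hEkill χ)
  choose C hC using hpieces
  have hinj : ∀ x ∈ (Finset.univ : Finset (Fin g → Fin (N+1))), ∀ y ∈ Finset.univ,
      (fun s => ((x s : ℕ))) = (fun s => ((y s : ℕ))) → x = y := by
    intro x _ y _ hxy
    funext s
    exact Fin.ext (congrFun hxy s)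
  refine ⟨a.support ×ˢ (Finset.univ.image (fun m : Fin g → Fin (N+1) => fun s => (m s : ℕ))),
    fun p => C p.1 (fun s => ⟨min (p.2 s) N, by omega⟩), ?_, ?_⟩
  · intro p hp s
    rw [Finset.mem_product] at hp
    obtain ⟨-, h2⟩ := hp
    rw [Finset.mem_image] at h2
    obtain ⟨m, -, hm⟩ := h2
    have := congrFun hm s
    simp only [← this]
    exact Nat.lt_succ_iff.mp (m s).isLt
  · intro z
    have hfz : f z = ∑ χ ∈ a.support, ((a χ : (Fin g → ℝ) → ℂ)) z := by
      have h1 := congrArg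
        (fun v : V => ((LinearMap.proj z : ((Fin g → ℝ) → ℂ) →ₗ[ℂ] ℂ).comp V.subtype) v) hsum
      simp only [Finsupp.sum] at h1
      rw [map_sum] at h1
      exact h1.symm
    rw [hfz, Finset.sum_product]
    apply Finset.sum_congr rfl
    intro χ hχ
    rw [hC χ z, Finset.sum_image hinj]
    apply Finset.sum_congr rfl
    intro m _
    have hmk : (fun s => (⟨min ((m s : ℕ)) N, by omega⟩ : Fin (N+1))) = m := by
      funext s
      apply Fin.ext
      have hms : (m s : ℕ) ≤ N := Nat.lt_succ_iff.mp (m s).isLt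
      simp [hms]
    show (C χ m * ∏ s : Fin g, ((z s : ℂ)) ^ ((m s : ℕ))) * Complex.exp (∑ s, χ s * ((z s : ℝ) : ℂ))
      = (C χ (fun s => (⟨min ((m s : ℕ)) N, by omega⟩ : Fin (N+1)))
          * ∏ s : Fin g, ((z s : ℂ)) ^ ((m s : ℕ)))
        * Complex.exp (∑ s, χ s * ((z s : ℝ) : ℂ))
    rw [hmk]
end
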